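/- For subdiagrams D, E ⊆ G, B(1_D, 1_E) = dinv(D, E), where B is the unique symmetric bilinear form with B(n,n) = Q(n), and dinv(D,E) = (#{c ∈ D∩E : m_D^E(c) < a/b < M_D^E(c)} + #{c ∈ D∩E : m_E^D(c) < a/b < M_E^D(c)})/2 with m_D^E(c) = leg_E(c)/(arm_D(c)+1) and M_D^E(c) = (leg_E(c)+1)/arm_D(c) (upper inequality automatic when arm = 0). -/

import Mathlib

open scoped BigOperators Classical

def g (a b : ℤ) (p : ℤ × ℤ) : ℤ := a * b - a * p.1 - b * p.2

def Gset (a b : ℤ) : Set (ℤ × ℤ) := {p | 1 ≤ p.1 ∧ 1 ≤ p.2 ∧ 0 < g a b p}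

def IsSubdiagram (a b : ℤ) (D : Set (ℤ × ℤ)) : Prop :=
  D ⊆ Gset a b ∧ ∀ p ∈ D, ∀ q ∈ Gset a b, q.1 ≤ p.1 → q.2 ≤ p.2 → q ∈ D

def U (D : Set (ℤ × ℤ)) : Set (ℤ × ℤ) :=
  {p | p ∉ D ∧ ((p.1, p.2 - 1) ∈ D ∨ (1 ≤ p.1 ∧ p.2 - 1 ≤ 0))}

/-- arm_D(c) = max {k : c − ka ∈ D}, where a acts as the vector (−1,0). -/
noncomputable def arm (D : Set (ℤ × ℤ)) (c : ℤ × ℤ) : ℕ :=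
  sSup {k : ℕ | (c.1 + (k : ℤ), c.2) ∈ D}

/-- leg_D(c) = max {k : c − kb ∈ D}, where b acts as the vector (0,−1). -/
noncomputable def leg (D : Set (ℤ × ℤ)) (c : ℤ × ℤ) : ℕ :=
  sSup {k : ℕ | (c.1, c.2 + (k : ℤ)) ∈ D}

noncomputable def Q (a b : ℤ) (n : ℤ × ℤ → ℝ) : ℝ :=
  ∑ᶠ i ∈ Gset a b, ∑ᶠ j ∈ Gset a b,
    ((if 0 ≤ g a b j - g a b i ∧ g a b j - g a b i < a then (1 : ℝ) else 0) -
      (if b ≤ g a b j - g a b i ∧ g a b j - g a b i < a + b then (1 : ℝ) else 0)) *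
      n i * n j

/-- The unique symmetric bilinear form associated with Q. -/
noncomputable def B (a b : ℤ) (n n' : ℤ × ℤ → ℝ) : ℝ :=
  (Q a b (n + n') - Q a b n - Q a b n') / 2

/-!
Write `κ(p, c)` for the coefficient of `n p * n c` in `Q`; it depends only on
`g c - g p = a * (p.1 - c.1) - b * (c.2 - p.2)`. Then `2 * B(1_D, 1_E)` is the sum of
`κ(p, c) + κ(c, p)` over `p ∈ D`, `c ∈ E`, and pointwise `κ(p, c) + κ(c, p) = δ(p, c) + δ(c, p)`,
where `δ` is the mixed second difference (in `p.1` and in `c.2`) of the indicator that the cell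
`(c.1, p.2)` with arm `p.1 - c.1` and leg `c.2 - p.2` satisfies the dinv inequalities.
Summed over `D × E`, `δ` telescopes to the pairs of a row end `p` of `D` and a column top `c`
of `E`, and these pairs correspond to the cells `(c.1, p.2)` of `D ∩ E`.
-/

open Finset

theorem Finset.sum_sub_comp_equiv {α M : Type*} [DecidableEq α] [AddCommGroup M]
    (s : Finset α) (σ : α ≃ α) (f : α → M) (hf : ∀ x ∈ s, σ x ∉ s → f (σ x) = 0) :
    ∑ x ∈ s, (f x - f (σ x)) = ∑ x ∈ s with σ.symm x ∉ s, f x := by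
  have hout : ∑ x ∈ s.map σ.toEmbedding \ s, f x = 0 := by
    refine sum_eq_zero fun x hx => ?_
    obtain ⟨hxσ, hxs⟩ := mem_sdiff.1 hx
    rw [mem_map_equiv] at hxσ
    simpa using hf _ hxσ (by simpa using hxs)
  have hmap : ∑ x ∈ s, f (σ x) = ∑ x ∈ s.map σ.toEmbedding, f x :=
    (s.sum_map σ.toEmbedding f).symm
  rw [sum_sub_distrib, hmap, ← sum_sdiff_sub_sum_sdiff, hout, sub_zero]
  congr 1
  ext x
  simp only [mem_sdiff, mem_filter, mem_map_equiv]

theorem Finset.sum_sum_mul_indicator {ι R : Type*} [CommSemiring R] {G s t : Finset ι}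
    (hs : s ⊆ G) (ht : t ⊆ G) (f : ι → ι → R) :
    ∑ i ∈ G, ∑ j ∈ G, f i j * ((s : Set ι).indicator 1 i * (t : Set ι).indicator 1 j) =
      ∑ i ∈ s, ∑ j ∈ t, f i j := by
  classical
  calc _ = ∑ i ∈ G, (s : Set ι).indicator
          (fun i => ∑ j ∈ G, (t : Set ι).indicator (f i) j) i :=
        sum_congr rfl fun i _ => by
          simp only [Set.indicator_apply, Pi.one_apply, mul_ite, mul_one, mul_zero]
          split_ifs <;> simp
    _ = _ := by
      rw [sum_indicator_subset _ hs]
      exact sum_congr rfl fun i _ => sum_indicator_subset _ ht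

theorem Nat.mem_iff_le_sSup {S : Set ℕ} (hS : IsLowerSet S) (hne : S.Nonempty)
    (hbdd : BddAbove S) (k : ℕ) : k ∈ S ↔ k ≤ sSup S :=
  ⟨fun hk => le_csSup hbdd hk, fun hk => hS hk (Nat.sSup_mem hne hbdd)⟩

def kernel (a b t : ℤ) : ℤ :=
  (if 0 ≤ t ∧ t < a then 1 else 0) - (if b ≤ t ∧ t < a + b then 1 else 0)

/-- With `x = arm` and `y = leg`: `y / (x + 1) < a / b < (y + 1) / x`. -/
def IsBalanced (a b x y : ℤ) : Prop :=
  b * y < a * (x + 1) ∧ a * x < b * (y + 1)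

instance (a b x y : ℤ) : Decidable (IsBalanced a b x y) :=
  inferInstanceAs (Decidable (_ ∧ _))

def hookWeight (a b x y : ℤ) : ℤ :=
  if 0 ≤ x ∧ 0 ≤ y ∧ IsBalanced a b x y then 1 else 0

def hookDiff (a b x y : ℤ) : ℤ :=
  hookWeight a b x y - hookWeight a b (x - 1) y -
    (hookWeight a b x (y - 1) - hookWeight a b (x - 1) (y - 1))

set_option maxHeartbeats 1000000 in
theorem kernel_add_kernel_neg {a b : ℤ} (ha : 0 < a) (hab : a < b) (x y : ℤ) :
    kernel a b (a * x - b * y) + kernel a b (-(a * x - b * y)) =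
      hookDiff a b x y + hookDiff a b (-x) (-y) := by
  have hx : x ≤ -1 ∧ a * x ≤ -a ∨ x = 0 ∨ 1 ≤ x ∧ a ≤ a * x := by
    rcases lt_trichotomy x 0 with h | rfl | h
    · exact Or.inl ⟨by omega, by nlinarith⟩
    · exact Or.inr (Or.inl rfl)
    · exact Or.inr (Or.inr ⟨by omega, by nlinarith⟩)
  have hy : y ≤ -2 ∧ b * y ≤ -2 * b ∨ y = -1 ∨ y = 0 ∨ y = 1 ∨ 2 ≤ y ∧ 2 * b ≤ b * y := by
    rcases le_or_gt y (-2) with h | h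
    · exact Or.inl ⟨h, by nlinarith⟩
    rcases le_or_gt 2 y with h' | h'
    · exact Or.inr (Or.inr (Or.inr (Or.inr ⟨h', by nlinarith⟩)))
    omega
  -- Once the signs of `x`, `y` and whether `y = ±1` are fixed, every indicator is decided by
  -- linear arithmetic in the atoms `a * x` and `b * y`.
  rcases hx with hx | rfl | hx <;> rcases hy with hy | rfl | rfl | rfl | hy <;>
    simp (disch := omega) only [hookDiff, hookWeight, ite_and, if_pos, if_neg] <;>
    simp only [kernel, IsBalanced, mul_add, mul_sub, mul_neg, mul_one, mul_zero, neg_neg,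
      sub_zero, neg_zero, zero_sub, zero_add] <;>
    split_ifs <;> omega

/-- Tests the cell `(c.1, p.2)` as if its arm ended at `p` and its leg at `c`. -/
def hook (a b : ℤ) (p c : ℤ × ℤ) : ℤ :=
  hookWeight a b (p.1 - c.1) (c.2 - p.2)

def cornerDiff (a b : ℤ) (p c : ℤ × ℤ) : ℤ :=
  hook a b p c - hook a b (p - (1, 0)) c -
    (hook a b p (c - (0, 1)) - hook a b (p - (1, 0)) (c - (0, 1)))

section Hooks

variable {a b : ℤ}

theorem hook_eq_zero_of_lt {p c : ℤ × ℤ} (h : p.1 < c.1 ∨ c.2 < p.2) : hook a b p c = 0 := by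
  rw [hook, hookWeight, if_neg]
  omega

theorem cornerDiff_eq_hookDiff (p c : ℤ × ℤ) :
    cornerDiff a b p c = hookDiff a b (p.1 - c.1) (c.2 - p.2) := by
  simp only [cornerDiff, hookDiff, hook, Prod.fst_sub, Prod.snd_sub, sub_zero]
  ring_nf

theorem kernel_add_kernel_swap (ha : 0 < a) (hab : a < b) (p c : ℤ × ℤ) :
    kernel a b (g a b c - g a b p) + kernel a b (g a b p - g a b c) =
      cornerDiff a b p c + cornerDiff a b c p := by
  have hu : g a b c - g a b p = a * (p.1 - c.1) - b * (c.2 - p.2) := by simp only [g]; ring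
  rw [cornerDiff_eq_hookDiff, cornerDiff_eq_hookDiff, ← neg_sub (g a b c), hu,
    ← neg_sub p.1 c.1, ← neg_sub c.2 p.2]
  exact kernel_add_kernel_neg ha hab _ _

end Hooks

section Subdiagram

variable {a b : ℤ} {D : Set (ℤ × ℤ)}

theorem Gset_finite (ha : 0 < a) (hb : 0 < b) : (Gset a b).Finite := by
  refine (Set.finite_Icc ((1 : ℤ), (1 : ℤ)) (b, a)).subset ?_
  rintro ⟨x, y⟩ ⟨hx, hy, hg⟩
  simp only [g] at hg
  exact ⟨⟨hx, hy⟩, by nlinarith, by nlinarith⟩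

theorem mem_Gset_of_le (ha : 0 < a) (hb : 0 < b) {p q : ℤ × ℤ} (hp : p ∈ Gset a b)
    (hq : (1, 1) ≤ q) (hqp : q ≤ p) : q ∈ Gset a b := by
  obtain ⟨-, -, hg⟩ := hp
  refine ⟨hq.1, hq.2, ?_⟩
  simp only [g] at hg ⊢
  nlinarith [hqp.1, hqp.2]

theorem IsSubdiagram.mem_of_le (ha : 0 < a) (hb : 0 < b) (hD : IsSubdiagram a b D)
    {p q : ℤ × ℤ} (hp : p ∈ D) (hq : (1, 1) ≤ q) (hqp : q ≤ p) : q ∈ D :=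
  hD.2 p hp q (mem_Gset_of_le ha hb (hD.1 hp) hq hqp) hqp.1 hqp.2

theorem IsSubdiagram.one_le (hD : IsSubdiagram a b D) {p : ℤ × ℤ} (hp : p ∈ D) : (1, 1) ≤ p :=
  ⟨(hD.1 hp).1, (hD.1 hp).2.1⟩

theorem IsSubdiagram.mem_ray_iff (ha : 0 < a) (hb : 0 < b) (hD : IsSubdiagram a b D)
    {z v : ℤ × ℤ} (hz : z ∈ D) (hv : 0 ≤ v) (hv0 : v ≠ 0) (k : ℕ) :
    z + (k : ℤ) • v ∈ D ↔ k ≤ sSup {j : ℕ | z + (j : ℤ) • v ∈ D} := by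
  refine Nat.mem_iff_le_sSup (S := {j : ℕ | z + (j : ℤ) • v ∈ D}) (fun k j hjk hk => ?_)
    ⟨0, by simpa using hz⟩ ?_ k
  · refine hD.mem_of_le ha hb hk ((hD.one_le hz).trans ?_) ?_
    · simpa using smul_nonneg (Int.natCast_nonneg j) hv
    · have := smul_le_smul_of_nonneg_right (Int.ofNat_le.2 hjk) hv
      simpa using this
  · have hinj : Function.Injective fun j : ℕ => z + (j : ℤ) • v :=
      (add_right_injective z).comp ((smul_left_injective ℤ hv0).comp Nat.cast_injective)
    exact ((Gset_finite ha hb).subset hD.1 |>.preimage hinj.injOn).bddAbove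

theorem IsSubdiagram.mem_row_iff (ha : 0 < a) (hb : 0 < b) (hD : IsSubdiagram a b D)
    {z : ℤ × ℤ} (hz : z ∈ D) (k : ℕ) : (z.1 + k, z.2) ∈ D ↔ k ≤ arm D z := by
  have hrow (j : ℕ) : z + (j : ℤ) • ((1, 0) : ℤ × ℤ) = (z.1 + j, z.2) := by ext <;> simp
  simpa only [hrow, arm] using hD.mem_ray_iff ha hb hz (v := (1, 0)) (by decide) (by simp) k

theorem IsSubdiagram.mem_col_iff (ha : 0 < a) (hb : 0 < b) (hD : IsSubdiagram a b D)
    {z : ℤ × ℤ} (hz : z ∈ D) (k : ℕ) : (z.1, z.2 + k) ∈ D ↔ k ≤ leg D z := by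
  have hcol (j : ℕ) : z + (j : ℤ) • ((0, 1) : ℤ × ℤ) = (z.1, z.2 + j) := by ext <;> simp
  simpa only [hcol, leg] using hD.mem_ray_iff ha hb hz (v := (0, 1)) (by decide) (by simp) k

theorem IsSubdiagram.arm_eq_of_notMem (ha : 0 < a) (hb : 0 < b) (hD : IsSubdiagram a b D)
    {p : ℤ × ℤ} (hp : p ∈ D) (hp' : p + (1, 0) ∉ D) {x : ℤ} (hx : 1 ≤ x) (hxp : x ≤ p.1) :
    (arm D (x, p.2) : ℤ) = p.1 - x := by
  have hz : (x, p.2) ∈ D := hD.mem_of_le ha hb hp ⟨hx, (hD.one_le hp).2⟩ ⟨hxp, le_rfl⟩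
  obtain ⟨k, hk⟩ := Int.eq_ofNat_of_zero_le (sub_nonneg.2 hxp)
  have hle : k ≤ arm D (x, p.2) :=
    (hD.mem_row_iff ha hb hz k).1 (by convert hp using 1; ext <;> simp; omega)
  have hlt : ¬ k + 1 ≤ arm D (x, p.2) := fun h =>
    hp' (by convert (hD.mem_row_iff ha hb hz (k + 1)).2 h using 1; ext <;> simp; omega)
  omega

theorem IsSubdiagram.leg_eq_of_notMem (ha : 0 < a) (hb : 0 < b) (hD : IsSubdiagram a b D)
    {p : ℤ × ℤ} (hp : p ∈ D) (hp' : p + (0, 1) ∉ D) {y : ℤ} (hy : 1 ≤ y) (hyp : y ≤ p.2) :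
    (leg D (p.1, y) : ℤ) = p.2 - y := by
  have hz : (p.1, y) ∈ D := hD.mem_of_le ha hb hp ⟨(hD.one_le hp).1, hy⟩ ⟨le_rfl, hyp⟩
  obtain ⟨k, hk⟩ := Int.eq_ofNat_of_zero_le (sub_nonneg.2 hyp)
  have hle : k ≤ leg D (p.1, y) :=
    (hD.mem_col_iff ha hb hz k).1 (by convert hp using 1; ext <;> simp; omega)
  have hlt : ¬ k + 1 ≤ leg D (p.1, y) := fun h =>
    hp' (by convert (hD.mem_col_iff ha hb hz (k + 1)).2 h using 1; ext <;> simp; omega)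
  omega

theorem IsSubdiagram.row_end_mem (ha : 0 < a) (hb : 0 < b) (hD : IsSubdiagram a b D)
    {z : ℤ × ℤ} (hz : z ∈ D) :
    (z.1 + arm D z, z.2) ∈ D ∧ (z.1 + arm D z, z.2) + (1, 0) ∉ D := by
  refine ⟨(hD.mem_row_iff ha hb hz _).2 le_rfl, fun h => ?_⟩
  have := (hD.mem_row_iff ha hb hz (arm D z + 1)).1 (by convert h using 1; ext <;> simp; ring)
  omega

theorem IsSubdiagram.col_top_mem (ha : 0 < a) (hb : 0 < b) (hD : IsSubdiagram a b D)
    {z : ℤ × ℤ} (hz : z ∈ D) :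
    (z.1, z.2 + leg D z) ∈ D ∧ (z.1, z.2 + leg D z) + (0, 1) ∉ D := by
  refine ⟨(hD.mem_col_iff ha hb hz _).2 le_rfl, fun h => ?_⟩
  have := (hD.mem_col_iff ha hb hz (leg D z + 1)).1 (by convert h using 1; ext <;> simp; ring)
  omega

end Subdiagram

section Counting

variable {a b : ℤ} {D E : Finset (ℤ × ℤ)}

theorem sum_sum_cornerDiff_eq_sum_ends (ha : 0 < a) (hb : 0 < b)
    (hD : IsSubdiagram a b ↑D) (hE : IsSubdiagram a b ↑E) :
    ∑ p ∈ D, ∑ c ∈ E, cornerDiff a b p c =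
      ∑ p ∈ D with p + (1, 0) ∉ D, ∑ c ∈ E with c + (0, 1) ∉ E, hook a b p c := by
  have hcol (p : ℤ × ℤ) (hp : p ∈ D) : ∑ c ∈ E, cornerDiff a b p c =
      ∑ c ∈ E with c + (0, 1) ∉ E, (hook a b p c - hook a b (p - (1, 0)) c) := by
    refine E.sum_sub_comp_equiv (Equiv.subRight (0, 1))
      (fun c => hook a b p c - hook a b (p - (1, 0)) c) fun c hc hc' => ?_
    simp only [Equiv.subRight_apply] at hc' ⊢
    have hbelow : (c - (0, 1)).2 < p.2 := by
      by_contra h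
      refine hc' (hE.mem_of_le ha hb hc ⟨by simpa using (hE.one_le hc).1, ?_⟩
        (sub_le_self c (by decide)))
      simp only [Prod.snd_sub] at h ⊢
      linarith [(hD.one_le hp).2]
    rw [hook_eq_zero_of_lt (Or.inr hbelow), hook_eq_zero_of_lt (Or.inr (by simpa using hbelow)),
      sub_zero]
  have hrow (c : ℤ × ℤ) (hc : c ∈ E) : ∑ p ∈ D, (hook a b p c - hook a b (p - (1, 0)) c) =
      ∑ p ∈ D with p + (1, 0) ∉ D, hook a b p c := by
    refine D.sum_sub_comp_equiv (Equiv.subRight (1, 0)) (fun p => hook a b p c)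
      fun p hp hp' => hook_eq_zero_of_lt (Or.inl ?_)
    simp only [Equiv.subRight_apply] at hp' ⊢
    by_contra h
    refine hp' (hD.mem_of_le ha hb hp ⟨?_, by simpa using (hD.one_le hp).2⟩
      (sub_le_self p (by decide)))
    simp only [Prod.fst_sub] at h ⊢
    linarith [(hE.one_le hc).1]
  rw [sum_congr rfl hcol, sum_comm, sum_congr rfl fun c hc => hrow c (mem_filter.1 hc).1,
    sum_comm]

theorem sum_sum_hook_ends_eq_card (ha : 0 < a) (hb : 0 < b)
    (hD : IsSubdiagram a b ↑D) (hE : IsSubdiagram a b ↑E) :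
    ∑ p ∈ D with p + (1, 0) ∉ D, ∑ c ∈ E with c + (0, 1) ∉ E, hook a b p c =
      #{z ∈ D | z ∈ E ∧ IsBalanced a b (arm ↑D z) (leg ↑E z)} := by
  simp only [hook, hookWeight]
  rw [← sum_product', sum_boole, Nat.cast_inj]
  have hends {p c : ℤ × ℤ} (h : (p, c) ∈ ((D.filter fun p => p + (1, 0) ∉ D) ×ˢ
      (E.filter fun c => c + (0, 1) ∉ E)).filter
        fun x => 0 ≤ x.1.1 - x.2.1 ∧ 0 ≤ x.2.2 - x.1.2 ∧
          IsBalanced a b (x.1.1 - x.2.1) (x.2.2 - x.1.2)) :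
      (c.1, p.2) ∈ D ∧ (c.1, p.2) ∈ E ∧ (arm ↑D (c.1, p.2) : ℤ) = p.1 - c.1 ∧
        (leg ↑E (c.1, p.2) : ℤ) = c.2 - p.2 ∧ IsBalanced a b (p.1 - c.1) (c.2 - p.2) := by
    simp only [mem_filter, mem_product] at h
    obtain ⟨⟨⟨hp, hp'⟩, hc, hc'⟩, hx, hy, hbal⟩ := h
    exact ⟨hD.mem_of_le ha hb hp ⟨(hE.one_le hc).1, (hD.one_le hp).2⟩ ⟨by omega, le_rfl⟩,
      hE.mem_of_le ha hb hc ⟨(hE.one_le hc).1, (hD.one_le hp).2⟩ ⟨le_rfl, by omega⟩,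
      hD.arm_eq_of_notMem ha hb hp hp' (hE.one_le hc).1 (by omega),
      hE.leg_eq_of_notMem ha hb hc hc' (hD.one_le hp).2 (by omega), hbal⟩
  refine card_nbij' (fun x => (x.2.1, x.1.2))
    (fun z => ((z.1 + arm ↑D z, z.2), (z.1, z.2 + leg ↑E z))) ?_ ?_ ?_ fun z _ => rfl
  · rintro ⟨p, c⟩ h
    obtain ⟨hzD, hzE, harm, hleg, hbal⟩ := hends h
    simp only [coe_filter, Set.mem_ofPred_eq, harm, hleg]
    exact ⟨hzD, hzE, hbal⟩
  · intro z hz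
    simp only [coe_filter, Set.mem_ofPred_eq, mem_product, mem_filter] at hz ⊢
    simp only [add_sub_cancel_left, Nat.cast_nonneg, true_and]
    exact ⟨⟨hD.row_end_mem ha hb hz.1, hE.col_top_mem ha hb hz.2.1⟩, hz.2.2⟩
  · rintro ⟨p, c⟩ h
    obtain ⟨-, -, harm, hleg, -⟩ := hends h
    ext <;> simp [harm, hleg]

theorem sum_sum_cornerDiff_eq_ncard (ha : 0 < a) (hb : 0 < b)
    (hD : IsSubdiagram a b ↑D) (hE : IsSubdiagram a b ↑E) :
    ∑ p ∈ D, ∑ c ∈ E, cornerDiff a b p c =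
      {z | z ∈ (↑D : Set (ℤ × ℤ)) ∧ z ∈ (↑E : Set (ℤ × ℤ)) ∧
        IsBalanced a b (arm ↑D z) (leg ↑E z)}.ncard := by
  rw [sum_sum_cornerDiff_eq_sum_ends ha hb hD hE, sum_sum_hook_ends_eq_card ha hb hD hE,
    ← Set.ncard_coe_finset, coe_filter]
  rfl

end Counting

section Polarization

variable {a b : ℤ}

theorem Q_eq_sum {G : Finset (ℤ × ℤ)} (hG : ↑G = Gset a b) (n : ℤ × ℤ → ℝ) :
    Q a b n = ∑ i ∈ G, ∑ j ∈ G, (kernel a b (g a b j - g a b i) : ℝ) * n i * n j := by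
  rw [Q, ← hG, finsum_mem_coe_finset]
  refine sum_congr rfl fun i _ => ?_
  rw [finsum_mem_coe_finset]
  push_cast [kernel]
  rfl

theorem B_eq_sum {G : Finset (ℤ × ℤ)} (hG : ↑G = Gset a b) (n n' : ℤ × ℤ → ℝ) :
    B a b n n' = (∑ i ∈ G, ∑ j ∈ G,
      (kernel a b (g a b j - g a b i) : ℝ) * (n i * n' j + n' i * n j)) / 2 := by
  rw [B, Q_eq_sum hG, Q_eq_sum hG, Q_eq_sum hG, ← sum_sub_distrib, ← sum_sub_distrib]
  congr 1
  refine sum_congr rfl fun i _ => ?_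
  rw [← sum_sub_distrib, ← sum_sub_distrib]
  refine sum_congr rfl fun j _ => ?_
  simp only [Pi.add_apply]
  ring

theorem B_indicator_eq {G D E : Finset (ℤ × ℤ)} (hG : ↑G = Gset a b) (hD : D ⊆ G)
    (hE : E ⊆ G) :
    B a b ((D : Set (ℤ × ℤ)).indicator 1) ((E : Set (ℤ × ℤ)).indicator 1) =
      ((∑ p ∈ D, ∑ c ∈ E,
        (kernel a b (g a b c - g a b p) + kernel a b (g a b p - g a b c)) : ℤ) : ℝ) / 2 := by
  rw [B_eq_sum hG]
  simp only [mul_add, sum_add_distrib, sum_sum_mul_indicator hD hE, sum_sum_mul_indicator hE hD]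
  rw [sum_comm (s := E)]
  push_cast
  rfl

end Polarization

theorem stmt14_general (a b : ℤ) (ha : 1 < a) (hab : a < b)
    (D E : Set (ℤ × ℤ)) (hD : IsSubdiagram a b D) (hE : IsSubdiagram a b E) :
    B a b (fun p => if p ∈ D then (1 : ℝ) else 0)
      (fun p => if p ∈ E then (1 : ℝ) else 0) =
      ((Set.ncard {c : ℤ × ℤ | c ∈ D ∧ c ∈ E ∧
          b * (leg E c : ℤ) < a * ((arm D c : ℤ) + 1) ∧
          a * (arm D c : ℤ) < b * ((leg E c : ℤ) + 1)} : ℝ) +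
        (Set.ncard {c : ℤ × ℤ | c ∈ D ∧ c ∈ E ∧
          b * (leg D c : ℤ) < a * ((arm E c : ℤ) + 1) ∧
          a * (arm E c : ℤ) < b * ((leg D c : ℤ) + 1)} : ℝ)) / 2 := by
  have ha0 : 0 < a := by omega
  have hb : 0 < b := by omega
  have hGfin := Gset_finite ha0 hb
  obtain ⟨G, hG⟩ := hGfin.exists_finset_coe
  obtain ⟨D, rfl⟩ := (hGfin.subset hD.1).exists_finset_coe
  obtain ⟨E, rfl⟩ := (hGfin.subset hE.1).exists_finset_coe
  have hsum :
      ∑ p ∈ D, ∑ c ∈ E, (kernel a b (g a b c - g a b p) + kernel a b (g a b p - g a b c)) =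
        ∑ p ∈ D, ∑ c ∈ E, cornerDiff a b p c + ∑ c ∈ E, ∑ p ∈ D, cornerDiff a b c p := by
    simp only [kernel_add_kernel_swap ha0 hab, sum_add_distrib]
    exact congrArg _ sum_comm
  change B a b ((D : Set (ℤ × ℤ)).indicator 1) ((E : Set (ℤ × ℤ)).indicator 1) = _
  rw [B_indicator_eq hG (coe_subset.1 (hG ▸ hD.1)) (coe_subset.1 (hG ▸ hE.1)), hsum,
    sum_sum_cornerDiff_eq_ncard ha0 hb hD hE, sum_sum_cornerDiff_eq_ncard ha0 hb hE hD]
  push_cast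
  simp only [IsBalanced, and_left_comm (a := _ ∈ (↑E : Set (ℤ × ℤ)))]

/-- B(1_D, 1_E) = dinv(D,E). -/
theorem stmt14 (a b : ℤ) (ha : 1 < a) (hab : a < b) (hcop : IsCoprime a b)
    (D E : Set (ℤ × ℤ)) (hD : IsSubdiagram a b D) (hE : IsSubdiagram a b E) :
    B a b (fun p => if p ∈ D then (1 : ℝ) else 0)
      (fun p => if p ∈ E then (1 : ℝ) else 0) =
      ((Set.ncard {c : ℤ × ℤ | c ∈ D ∧ c ∈ E ∧
          b * (leg E c : ℤ) < a * ((arm D c : ℤ) + 1) ∧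
          a * (arm D c : ℤ) < b * ((leg E c : ℤ) + 1)} : ℝ) +
        (Set.ncard {c : ℤ × ℤ | c ∈ D ∧ c ∈ E ∧
          b * (leg D c : ℤ) < a * ((arm E c : ℤ) + 1) ∧
          a * (arm E c : ℤ) < b * ((leg D c : ℤ) + 1)} : ℝ)) / 2 :=
  stmt14_general a b ha hab D E hD hE
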